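/- Let H = (V, E) be a 3-uniform hypergraph with |V| = n ≥ 2, and set ε = 1/n^{100}. Suppose each vertex a ∈ V is assigned a unit vector u_a ∈ ℝⁿ such that ‖u_a + u_b + u_c‖² ≤ 18ε for every edge {a, b, c} ∈ E. Let Δ ≥ 4 satisfy |E| ≤ Δn/3, and set α = 1/(32 Δ^{1/3} (ln Δ)^{1/2}). Then H contains an odd independent set S ⊆ V with |S| ≥ (3/4) α n. -/

import Mathlib

/-!
Round the vectors with a standard Gaussian `x`: keep the vertices `a` with `⟪u a, x⟫ ≥ t`.
A vertex is kept with probability `T(t)`, the Gaussian tail. Two vertices `a, b` of an edge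
`{a, b, c}` are both kept only if `⟪u a + u b, x⟫ ≥ 2t`, and `u a + u b ≈ -u c` has norm
about `1`, so this happens with probability about `T(2t) ≈ T(t)⁴`. Deleting one vertex of every
kept pair leaves an odd independent set of expected size at least `n T(t) - 3|E| T(2t/(1+δ))`.
For `e^{-t²/2} = (9/20) Δ^{-1/3}` the Mills-ratio bounds `T(s) ≈ e^{-s²/2}/(s√(2π))` make this
at least `(3/4) α n`.
-/

open Finset Real MeasureTheory ProbabilityTheory
open scoped RealInnerProductSpace

theorem Finset.exists_eq_insert_insert_singleton_of_card_eq_three {α : Type*} [DecidableEq α]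
    {e : Finset α} (he : #e = 3) {a b : α} (ha : a ∈ e) (hb : b ∈ e) (hab : a ≠ b) :
    ∃ c, a ≠ c ∧ b ≠ c ∧ e = {a, b, c} := by
  have hb' : b ∈ e.erase a := mem_erase.2 ⟨hab.symm, hb⟩
  obtain ⟨c, hc⟩ := card_eq_one.1 (show #((e.erase a).erase b) = 1 by
    rw [card_erase_of_mem hb', card_erase_of_mem ha, he])
  have hcmem : c ∈ (e.erase a).erase b := hc ▸ mem_singleton_self c
  simp only [mem_erase] at hcmem
  exact ⟨c, hcmem.2.1.symm, hcmem.1.symm, by rw [← insert_erase ha, ← insert_erase hb', hc]⟩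

theorem Finset.exists_subset_forall_not_subset_card_le {α : Type*} [DecidableEq α]
    (P : Finset (Finset α)) (hP : ∀ p ∈ P, p.Nonempty) (s : Finset α) :
    ∃ t ⊆ s, (∀ p ∈ P, ¬p ⊆ t) ∧ #s ≤ #t + #{p ∈ P | p ⊆ s} := by
  induction s using Finset.strongInduction with
  | H s ih =>
    by_cases h : ∃ p ∈ P, p ⊆ s
    · obtain ⟨p, hp, hps⟩ := h
      obtain ⟨a, ha⟩ := hP p hp
      obtain ⟨t, hts, ht, hcard⟩ := ih (s.erase a) (erase_ssubset (hps ha))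
      have hfewer : #{q ∈ P | q ⊆ s.erase a} < #{q ∈ P | q ⊆ s} := by
        refine card_lt_card ⟨monotone_filter_right _ fun q _ hq => hq.trans (erase_subset a s),
          fun hsub => ?_⟩
        exact notMem_erase a s ((mem_filter.1 (hsub (mem_filter.2 ⟨hp, hps⟩))).2 ha)
      have hs_erase := card_erase_of_mem (hps ha)
      have hs_pos := card_pos.2 ⟨a, hps ha⟩
      exact ⟨t, hts.trans (erase_subset a s), ht, by omega⟩
    · push Not at h
      exact ⟨s, subset_rfl, h, le_self_add⟩

section Hypergraph

variable {V : Type*} [DecidableEq V]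

def IsOddIndepSet (E : Finset (Finset V)) (S : Finset V) : Prop :=
  ∀ e ∈ E, #(e ∩ S) ≤ 1

def edgePairs (E : Finset (Finset V)) : Finset (Finset V) :=
  E.biUnion (powersetCard 2)

lemma mem_edgePairs {E : Finset (Finset V)} {p : Finset V} :
    p ∈ edgePairs E ↔ ∃ e ∈ E, ∃ a ∈ e, ∃ b ∈ e, a ≠ b ∧ p = {a, b} := by
  simp only [edgePairs, mem_biUnion, mem_powersetCard, card_eq_two]
  constructor
  · rintro ⟨e, he, hpe, a, b, hab, rfl⟩
    exact ⟨e, he, a, hpe (by simp), b, hpe (by simp), hab, rfl⟩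
  · rintro ⟨e, he, a, ha, b, hb, hab, rfl⟩
    exact ⟨e, he, by simp [insert_subset_iff, ha, hb], a, b, hab, rfl⟩

lemma card_edgePairs_le (E : Finset (Finset V)) :
    #(edgePairs E) ≤ ∑ e ∈ E, (#e).choose 2 := by
  simpa only [edgePairs, card_powersetCard] using card_biUnion_le (s := E) (t := powersetCard 2)

lemma isOddIndepSet_of_forall_edgePairs_not_subset {E : Finset (Finset V)} {S : Finset V}
    (h : ∀ p ∈ edgePairs E, ¬p ⊆ S) : IsOddIndepSet E S := by
  intro e he
  by_contra! hlt
  obtain ⟨a, ha, b, hb, hab⟩ := one_lt_card.1 hlt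
  rw [mem_inter] at ha hb
  exact h {a, b} (mem_edgePairs.2 ⟨e, he, a, ha.1, b, hb.1, hab, rfl⟩)
    (insert_subset ha.2 (singleton_subset_iff.2 hb.2))

end Hypergraph

section CardFilter

variable {Ω ι : Type*} (s : Finset ι) {p : ι → Ω → Prop} [∀ i x, Decidable (p i x)]

lemma natCast_card_filter_eq_sum_indicator (x : Ω) :
    (#{i ∈ s | p i x} : ℝ) = ∑ i ∈ s, {y | p i y}.indicator 1 x := by
  rw [natCast_card_filter]
  exact sum_congr rfl fun i _ => by simp [Set.indicator_apply]

variable [MeasurableSpace Ω] (μ : Measure Ω) [IsFiniteMeasure μ]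

lemma integrable_natCast_card_filter (hp : ∀ i ∈ s, MeasurableSet {x | p i x}) :
    Integrable (fun x => (#{i ∈ s | p i x} : ℝ)) μ := by
  simp_rw [natCast_card_filter_eq_sum_indicator]
  exact integrable_finsetSum _ fun i hi => (integrable_const 1).indicator (hp i hi)

lemma integral_natCast_card_filter (hp : ∀ i ∈ s, MeasurableSet {x | p i x}) :
    ∫ x, (#{i ∈ s | p i x} : ℝ) ∂μ = ∑ i ∈ s, μ.real {x | p i x} := by
  simp_rw [natCast_card_filter_eq_sum_indicator]
  rw [integral_finsetSum _ fun i hi => (integrable_const 1).indicator (hp i hi)]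
  exact sum_congr rfl fun i hi => integral_indicator_one (hp i hi)

end CardFilter

section GaussianTail

lemma gaussianPDFReal_zero_one (z : ℝ) :
    gaussianPDFReal 0 1 z = (√(2 * π))⁻¹ * exp (-z ^ 2 / 2) := by
  simp [gaussianPDFReal]

lemma hasDerivAt_gaussianPDFReal_zero_one (z : ℝ) :
    HasDerivAt (gaussianPDFReal 0 1) (-(z * gaussianPDFReal 0 1 z)) z := by
  have h : HasDerivAt (fun w : ℝ => -w ^ 2 / 2) (-z) z :=
    ((hasDerivAt_pow 2 z).neg.div_const 2).congr_deriv (by ring)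
  rw [funext gaussianPDFReal_zero_one]
  exact (h.exp.const_mul _).congr_deriv (by ring)

lemma tendsto_gaussianPDFReal_zero_one_atTop :
    Filter.Tendsto (gaussianPDFReal 0 1) Filter.atTop (nhds 0) := by
  have h : Filter.Tendsto (fun w : ℝ => -w ^ 2 / 2) Filter.atTop Filter.atBot :=
    (Filter.tendsto_neg_atTop_atBot.comp (Filter.tendsto_pow_atTop two_ne_zero)).atBot_div_const
      two_pos
  simpa [funext gaussianPDFReal_zero_one] using (tendsto_exp_atBot.comp h).const_mul (√(2 * π))⁻¹

lemma gaussianPDFReal_zero_one_le {a b : ℝ} (ha : 0 ≤ a) (hab : a ≤ b) :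
    gaussianPDFReal 0 1 b ≤ gaussianPDFReal 0 1 a := by
  simp only [gaussianPDFReal_zero_one]
  gcongr

noncomputable def gaussianTail (τ : ℝ) : ℝ := (gaussianReal 0 1).real (Set.Ici τ)

lemma gaussianTail_nonneg (τ : ℝ) : 0 ≤ gaussianTail τ := measureReal_nonneg

lemma gaussianTail_eq_integral (τ : ℝ) :
    gaussianTail τ = ∫ z in Set.Ioi τ, gaussianPDFReal 0 1 z := by
  rw [gaussianTail, measureReal_def, gaussianReal_apply_eq_integral _ one_ne_zero,
    ENNReal.toReal_ofReal (setIntegral_nonneg measurableSet_Ici fun z _ =>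
      gaussianPDFReal_nonneg _ _ _), integral_Ici_eq_integral_Ioi]

lemma gaussianTail_le {s : ℝ} (hs : 0 < s) :
    gaussianTail s ≤ exp (-s ^ 2 / 2) / (s * √(2 * π)) := by
  have hderiv : ∀ z ∈ Set.Ici s, HasDerivAt (fun w => -gaussianPDFReal 0 1 w)
      (z * gaussianPDFReal 0 1 z) z := fun z _ =>
    (hasDerivAt_gaussianPDFReal_zero_one z).neg.congr_deriv (neg_neg _)
  have hnonneg : ∀ z ∈ Set.Ioi s, 0 ≤ z * gaussianPDFReal 0 1 z := fun z hz =>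
    mul_nonneg (hs.trans hz).le (gaussianPDFReal_nonneg _ _ _)
  have hlim := tendsto_gaussianPDFReal_zero_one_atTop.neg
  rw [neg_zero] at hlim
  -- `z / s ≥ 1` on the range of integration, and `z φ(z)` integrates to `φ(s)`.
  calc gaussianTail s ≤ ∫ z in Set.Ioi s, s⁻¹ * (z * gaussianPDFReal 0 1 z) := by
        rw [gaussianTail_eq_integral]
        refine setIntegral_mono_on (integrable_gaussianPDFReal 0 1).integrableOn
          ((integrableOn_Ioi_deriv_of_nonneg' hderiv hnonneg hlim).const_mul _)
          measurableSet_Ioi fun z hz => ?_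
        rw [← mul_assoc, ← div_eq_inv_mul]
        exact le_mul_of_one_le_left (gaussianPDFReal_nonneg _ _ _)
          ((one_le_div hs).2 (le_of_lt hz))
    _ = exp (-s ^ 2 / 2) / (s * √(2 * π)) := by
        rw [integral_const_mul, integral_Ioi_of_hasDerivAt_of_nonneg' hderiv hnonneg hlim,
          gaussianPDFReal_zero_one]
        field_simp
        ring

lemma mul_gaussianPDFReal_le_gaussianTail {t a : ℝ} (ht : 0 ≤ t) (ha : 0 ≤ a) :
    a * gaussianPDFReal 0 1 (t + a) ≤ gaussianTail t := by
  calc a * gaussianPDFReal 0 1 (t + a)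
      = ∫ _ in Set.Ioc t (t + a), gaussianPDFReal 0 1 (t + a) := by
        rw [setIntegral_const, Measure.real, Real.volume_Ioc,
          ENNReal.toReal_ofReal (by linarith), smul_eq_mul]
        ring
    _ ≤ ∫ z in Set.Ioc t (t + a), gaussianPDFReal 0 1 z :=
        setIntegral_mono_on (integrableOn_const measure_Ioc_lt_top.ne)
          (integrable_gaussianPDFReal 0 1).integrableOn measurableSet_Ioc
          fun z hz => gaussianPDFReal_zero_one_le (ht.trans hz.1.le) hz.2
    _ ≤ gaussianTail t := by
        rw [gaussianTail_eq_integral]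
        exact setIntegral_mono_set (integrable_gaussianPDFReal 0 1).integrableOn
          (ae_of_all _ fun z => gaussianPDFReal_nonneg _ _ _) Set.Ioc_subset_Ioi_self.eventuallyLE

lemma le_gaussianTail {t : ℝ} (ht : 0 < t) (ht2 : 12 / 5 ≤ t ^ 2) :
    3 / 10 * exp (-t ^ 2 / 2) / (t * √(2 * π)) ≤ gaussianTail t := by
  have hexp : exp (-(t + 4 / (5 * t)) ^ 2 / 2) =
      exp (-t ^ 2 / 2) * exp (-(4 / 5 + 8 / (25 * t ^ 2))) := by
    rw [← exp_add]; congr 1; field_simp; ring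
  have hsmall : 3 / 8 ≤ exp (-(4 / 5 + 8 / (25 * t ^ 2))) := by
    have harg : 8 / (25 * t ^ 2) ≤ 2 / 15 := by
      rw [div_le_iff₀ (by positivity)]; nlinarith
    have h1 : exp (-(47 / 50)) = exp (3 / 50) * exp (-1) := by rw [← exp_add]; norm_num
    have h2 := add_one_le_exp (3 / 50 : ℝ)
    have h3 := exp_neg_one_gt_d9
    calc (3 / 8 : ℝ) ≤ exp (-(47 / 50)) := by rw [h1]; nlinarith [exp_pos (-1)]
      _ ≤ exp (-(4 / 5 + 8 / (25 * t ^ 2))) := exp_le_exp.2 (by linarith)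
  -- the rectangle of width `4 / (5t)` under the density to the right of `t`
  refine le_trans ?_ (mul_gaussianPDFReal_le_gaussianTail ht.le (a := 4 / (5 * t)) (by positivity))
  have hπ : 0 < √(2 * π) := by positivity
  have hrect : 4 / (5 * t) * ((√(2 * π))⁻¹ * (exp (-t ^ 2 / 2) * exp (-(4 / 5 + 8 / (25 * t ^ 2)))))
      = 4 / 5 * exp (-(4 / 5 + 8 / (25 * t ^ 2))) * (exp (-t ^ 2 / 2) / (t * √(2 * π))) := by
    field_simp
  rw [gaussianPDFReal_zero_one, hexp, hrect, mul_div_assoc]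
  gcongr
  linarith

lemma gaussianTail_two_mul_div_le {t δ : ℝ} (ht : 0 < t) (hδ : 0 ≤ δ) (hδ1 : δ ≤ 1) :
    gaussianTail (2 * t / (1 + δ)) ≤
      exp (4 * δ * t ^ 2) * exp (-t ^ 2 / 2) ^ 4 / (t * √(2 * π)) := by
  set s := 2 * t / (1 + δ)
  have hs : 0 < s := by positivity
  have hts : t ≤ s := by rw [le_div_iff₀ (by linarith)]; nlinarith
  -- `(1 + δ)² (1 - 2δ) ≤ 1`
  have hsq : 4 * t ^ 2 * (1 - 2 * δ) ≤ s ^ 2 := by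
    rw [div_pow, le_div_iff₀ (by positivity)]
    nlinarith [mul_nonneg (mul_nonneg hδ hδ) (sq_nonneg t),
      mul_nonneg (pow_nonneg hδ 3) (sq_nonneg t)]
  calc gaussianTail s ≤ exp (-s ^ 2 / 2) / (s * √(2 * π)) := gaussianTail_le hs
    _ ≤ exp (4 * δ * t ^ 2 + 4 * (-t ^ 2 / 2)) / (t * √(2 * π)) :=
        div_le_div₀ (exp_pos _).le (exp_le_exp.2 (by linarith)) (by positivity)
          (by gcongr)
    _ = exp (4 * δ * t ^ 2) * exp (-t ^ 2 / 2) ^ 4 / (t * √(2 * π)) := by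
        rw [exp_add, ← exp_nat_mul]; norm_num

end GaussianTail

section Rounding

variable {F : Type*} [NormedAddCommGroup F] [InnerProductSpace ℝ F] [FiniteDimensional ℝ F]
  [MeasurableSpace F] [BorelSpace F]

lemma stdGaussian_map_inner (v : F) :
    (stdGaussian F).map (fun x => ⟪v, x⟫) = (gaussianReal 0 1).map (‖v‖ * ·) := by
  have h := IsGaussian.map_eq_gaussianReal (μ := stdGaussian F) (innerSL ℝ v)
  rw [integral_strongDual_stdGaussian, variance_dual_stdGaussian, innerSL_apply_norm] at h
  rw [gaussianReal_map_const_mul]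
  convert h using 2 <;> simp [← NNReal.coe_inj]

lemma stdGaussian_real_le_inner (v : F) (s : ℝ) :
    (stdGaussian F).real {x | s ≤ ⟪v, x⟫} = (gaussianReal 0 1).real {z | s ≤ ‖v‖ * z} := by
  have h := map_measureReal_apply (μ := stdGaussian F) (f := fun x => ⟪v, x⟫) (by fun_prop)
    (measurableSet_Ici (a := s))
  rw [stdGaussian_map_inner, map_measureReal_apply (by fun_prop) measurableSet_Ici] at h
  exact h.symm

lemma stdGaussian_real_le_inner_of_norm_eq_one {v : F} (hv : ‖v‖ = 1) (s : ℝ) :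
    (stdGaussian F).real {x | s ≤ ⟪v, x⟫} = gaussianTail s := by
  simp [stdGaussian_real_le_inner, hv, gaussianTail, Set.Ici]

lemma stdGaussian_real_le_inner_le {v : F} {s r : ℝ} (hs : 0 < s) (hr : 0 < r) (hv : ‖v‖ ≤ r) :
    (stdGaussian F).real {x | s ≤ ⟪v, x⟫} ≤ gaussianTail (s / r) := by
  rw [stdGaussian_real_le_inner]
  refine measureReal_mono fun z (hz : s ≤ ‖v‖ * z) => ?_
  have hz0 : 0 < z := pos_of_mul_pos_right (hs.trans_le hz) (norm_nonneg v)
  rw [Set.mem_Ici, div_le_iff₀ hr]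
  nlinarith

variable {V : Type*} [Fintype V]

noncomputable def thresholdSet (u : V → F) (t : ℝ) (x : F) : Finset V := {a | t ≤ ⟪u a, x⟫}

lemma measurableSet_subset_thresholdSet (u : V → F) (t : ℝ) (p : Finset V) :
    MeasurableSet {x | p ⊆ thresholdSet u t x} := by
  have : {x | p ⊆ thresholdSet u t x} = ⋂ a ∈ p, {x | t ≤ ⟪u a, x⟫} := by
    ext x; simp [thresholdSet, subset_iff]
  rw [this]
  exact Finset.measurableSet_biInter p fun a _ => measurableSet_le measurable_const (by fun_prop)

variable [DecidableEq V]

lemma stdGaussian_real_subset_thresholdSet_le {E : Finset (Finset V)} {u : V → F} {r t : ℝ}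
    (hr : 0 < r) (ht : 0 < t) (hpair : ∀ e ∈ E, ∀ a ∈ e, ∀ b ∈ e, a ≠ b → ‖u a + u b‖ ≤ r)
    {p : Finset V} (hp : p ∈ edgePairs E) :
    (stdGaussian F).real {x | p ⊆ thresholdSet u t x} ≤ gaussianTail (2 * t / r) := by
  obtain ⟨e, he, a, ha, b, hb, hab, rfl⟩ := mem_edgePairs.1 hp
  refine le_trans (measureReal_mono fun x hx => ?_)
    (stdGaussian_real_le_inner_le (by positivity) hr (hpair e he a ha b hb hab))
  replace hx : {a, b} ⊆ thresholdSet u t x := hx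
  simp only [thresholdSet, insert_subset_iff, singleton_subset_iff, mem_filter, mem_univ,
    true_and] at hx
  change 2 * t ≤ ⟪u a + u b, x⟫
  rw [inner_add_left]
  linarith

lemma exists_le_card_thresholdSet_sub (E : Finset (Finset V)) {u : V → F}
    (hu : ∀ a, ‖u a‖ = 1) {r t : ℝ} (hr : 0 < r) (ht : 0 < t)
    (hpair : ∀ e ∈ E, ∀ a ∈ e, ∀ b ∈ e, a ≠ b → ‖u a + u b‖ ≤ r) :
    ∃ x, Fintype.card V * gaussianTail t - (∑ e ∈ E, (#e).choose 2) * gaussianTail (2 * t / r) ≤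
      #(thresholdSet u t x) - #{p ∈ edgePairs E | p ⊆ thresholdSet u t x} := by
  have hvert : ∀ a ∈ (univ : Finset V), MeasurableSet {x | t ≤ ⟪u a, x⟫} :=
    fun a _ => measurableSet_le measurable_const (by fun_prop)
  have hpairs : ∀ p ∈ edgePairs E, MeasurableSet {x | p ⊆ thresholdSet u t x} :=
    fun p _ => measurableSet_subset_thresholdSet u t p
  have hint₁ : Integrable (fun x => (#(thresholdSet u t x) : ℝ)) (stdGaussian F) :=
    integrable_natCast_card_filter univ _ hvert
  have hint₂ := integrable_natCast_card_filter (edgePairs E) (stdGaussian F) hpairs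
  obtain ⟨x, hx⟩ := exists_integral_le (f := fun x => (#(thresholdSet u t x) : ℝ) -
    #{p ∈ edgePairs E | p ⊆ thresholdSet u t x}) (hint₁.sub hint₂)
  refine ⟨x, le_trans ?_ hx⟩
  rw [integral_sub hint₁ hint₂, integral_natCast_card_filter _ _ hpairs,
    show ∫ x, (#(thresholdSet u t x) : ℝ) ∂stdGaussian F = _ from
      integral_natCast_card_filter univ _ hvert]
  have hverts : ∑ a, (stdGaussian F).real {x | t ≤ ⟪u a, x⟫} = Fintype.card V * gaussianTail t := by
    simp [stdGaussian_real_le_inner_of_norm_eq_one (hu _)]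
  have hbad : ∑ p ∈ edgePairs E, (stdGaussian F).real {x | p ⊆ thresholdSet u t x} ≤
      (∑ e ∈ E, (#e).choose 2) * gaussianTail (2 * t / r) := by
    refine (sum_le_card_nsmul _ _ _ fun p hp =>
      stdGaussian_real_subset_thresholdSet_le hr ht hpair hp).trans ?_
    rw [nsmul_eq_mul]
    gcongr
    · exact gaussianTail_nonneg _
    · exact_mod_cast card_edgePairs_le E
  linarith

theorem exists_isOddIndepSet_card_ge (E : Finset (Finset V)) {u : V → F}
    (hu : ∀ a, ‖u a‖ = 1) {r t : ℝ} (hr : 0 < r) (ht : 0 < t)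
    (hpair : ∀ e ∈ E, ∀ a ∈ e, ∀ b ∈ e, a ≠ b → ‖u a + u b‖ ≤ r) :
    ∃ S, IsOddIndepSet E S ∧
      Fintype.card V * gaussianTail t - (∑ e ∈ E, (#e).choose 2) * gaussianTail (2 * t / r) ≤
        #S := by
  obtain ⟨x, hx⟩ := exists_le_card_thresholdSet_sub E hu hr ht hpair
  have hne : ∀ p ∈ edgePairs E, p.Nonempty := fun p hp => by
    obtain ⟨-, -, a, -, b, -, -, rfl⟩ := mem_edgePairs.1 hp
    exact insert_nonempty a {b}
  obtain ⟨S, -, hS, hcard⟩ :=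
    exists_subset_forall_not_subset_card_le (edgePairs E) hne (thresholdSet u t x)
  refine ⟨S, isOddIndepSet_of_forall_edgePairs_not_subset hS, hx.trans ?_⟩
  have : (#(thresholdSet u t x) : ℝ) ≤ #S + #{p ∈ edgePairs E | p ⊆ thresholdSet u t x} := by
    exact_mod_cast hcard
  linarith

end Rounding

section Threshold

noncomputable def oddIndepDensity (Δ : ℝ) : ℝ := 1 / (32 * Δ ^ (1 / 3 : ℝ) * √(log Δ))

/-- Chosen so that `exp (-t² / 2) = (9 / 20) Δ^(-1/3)`: then `Δ T(2t) ≈ Δ T(t)⁴` is a small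
fraction of `T(t)`. -/
noncomputable def roundingThreshold (Δ : ℝ) : ℝ := √(2 * log (20 / 9 * Δ ^ (1 / 3 : ℝ)))

variable {Δ : ℝ}

lemma roundingThreshold_sq (hΔ : 1 ≤ Δ) :
    roundingThreshold Δ ^ 2 = 2 * log (20 / 9 * Δ ^ (1 / 3 : ℝ)) := by
  have h : 1 ≤ 20 / 9 * Δ ^ (1 / 3 : ℝ) := by
    nlinarith [one_le_rpow hΔ (by norm_num : (0 : ℝ) ≤ 1 / 3)]
  exact sq_sqrt (by linarith [log_nonneg h])

lemma roundingThreshold_sq_eq_add (hΔ : 1 ≤ Δ) :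
    roundingThreshold Δ ^ 2 = 2 * log (20 / 9) + 2 / 3 * log Δ := by
  rw [roundingThreshold_sq hΔ, log_mul (by norm_num) (by positivity), log_rpow (by linarith)]
  ring

lemma rpow_mul_exp_neg_roundingThreshold_sq (hΔ : 1 ≤ Δ) :
    Δ ^ (1 / 3 : ℝ) * exp (-roundingThreshold Δ ^ 2 / 2) = 9 / 20 := by
  have hX : 0 < Δ ^ (1 / 3 : ℝ) := by positivity
  rw [roundingThreshold_sq hΔ, show ∀ y : ℝ, -(2 * y) / 2 = -y from fun y => by ring, exp_neg,
    exp_log (by positivity)]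
  field_simp

lemma le_log_of_four_le (hΔ : 4 ≤ Δ) : 1.38 ≤ log Δ := by
  have h4 : log 4 = 2 * log 2 := by
    rw [show (4 : ℝ) = 2 ^ 2 by norm_num, log_pow]; norm_num
  linarith [log_le_log (by norm_num) hΔ, log_two_gt_d9]

lemma twelve_fifths_le_roundingThreshold_sq (hΔ : 4 ≤ Δ) : 12 / 5 ≤ roundingThreshold Δ ^ 2 := by
  have h : 3 / 4 ≤ log (20 / 9) := by
    rw [le_log_iff_exp_le (by norm_num)]
    have h1 : exp (3 / 4) * exp (1 / 4) = exp 1 := by rw [← exp_add]; norm_num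
    nlinarith [add_one_le_exp (1 / 4 : ℝ), exp_one_lt_d9, exp_pos (3 / 4)]
  rw [roundingThreshold_sq_eq_add (by linarith)]
  linarith [le_log_of_four_le hΔ]

lemma roundingThreshold_sq_le (hΔ : 1 ≤ Δ) : roundingThreshold Δ ^ 2 ≤ 2 + 2 / 3 * log Δ := by
  have h : log (20 / 9) ≤ 1 := by
    rw [log_le_iff_le_exp (by norm_num)]
    linarith [exp_one_gt_d9]
  rw [roundingThreshold_sq_eq_add hΔ]
  linarith

lemma roundingThreshold_pos (hΔ : 4 ≤ Δ) : 0 < roundingThreshold Δ :=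
  sqrt_pos.2 (by nlinarith [twelve_fifths_le_roundingThreshold_sq hΔ,
    roundingThreshold_sq (by linarith : (1 : ℝ) ≤ Δ)])

lemma three_quarters_mul_oddIndepDensity_le (hΔ : 4 ≤ Δ) :
    3 / 4 * oddIndepDensity Δ ≤
      exp (-roundingThreshold Δ ^ 2 / 2) / (5 * (roundingThreshold Δ * √(2 * π))) := by
  set t := roundingThreshold Δ
  have ht := roundingThreshold_pos hΔ
  have hL := le_log_of_four_le hΔ
  have hK : 25 * (t * √(2 * π)) ≤ 96 * √(log Δ) := by
    refine (pow_le_pow_iff_left₀ (by positivity) (by positivity) two_ne_zero).1 ?_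
    rw [mul_pow, mul_pow, mul_pow, sq_sqrt (by positivity), sq_sqrt (by linarith)]
    nlinarith [roundingThreshold_sq_le (by linarith : (1 : ℝ) ≤ Δ), pi_lt_d2, pi_pos]
  rw [oddIndepDensity, mul_one_div, div_le_div_iff₀ (by positivity) (by positivity),
    show exp (-t ^ 2 / 2) * (32 * Δ ^ (1 / 3 : ℝ) * √(log Δ)) =
      32 * (Δ ^ (1 / 3 : ℝ) * exp (-t ^ 2 / 2)) * √(log Δ) by ring,
    rpow_mul_exp_neg_roundingThreshold_sq (by linarith)]
  linarith

lemma three_quarters_mul_oddIndepDensity_le_gaussianTail_sub {δ : ℝ} (hΔ : 4 ≤ Δ) (hδ : 0 ≤ δ)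
    (hδt : δ * roundingThreshold Δ ^ 2 ≤ 1 / 80) :
    3 / 4 * oddIndepDensity Δ ≤
      gaussianTail (roundingThreshold Δ) -
        Δ * gaussianTail (2 * roundingThreshold Δ / (1 + δ)) := by
  set t := roundingThreshold Δ
  set β := exp (-t ^ 2 / 2)
  set K := t * √(2 * π)
  have ht := roundingThreshold_pos hΔ
  have ht2 := twelve_fifths_le_roundingThreshold_sq hΔ
  have hc : 0 < β / K := by positivity
  have hΔβ : Δ * β ^ 3 = (9 / 20) ^ 3 := by
    have hX3 : (Δ ^ (1 / 3 : ℝ)) ^ 3 = Δ := by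
      rw [← rpow_natCast, ← rpow_mul (by linarith)]; norm_num
    have hXβ : Δ ^ (1 / 3 : ℝ) * β = 9 / 20 := rpow_mul_exp_neg_roundingThreshold_sq (by linarith)
    rw [← hXβ, mul_pow, hX3]
  have hexp : exp (4 * δ * t ^ 2) ≤ 20 / 19 := by
    have hlow := add_one_le_exp (-(4 * δ * t ^ 2))
    have hinv : exp (4 * δ * t ^ 2) * exp (-(4 * δ * t ^ 2)) = 1 := by rw [← exp_add]; simp
    nlinarith [exp_pos (4 * δ * t ^ 2)]
  calc 3 / 4 * oddIndepDensity Δ ≤ β / (5 * K) := three_quarters_mul_oddIndepDensity_le hΔ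
    _ = 3 / 10 * β / K - 1 / 10 * (β / K) := by field_simp; ring
    _ ≤ gaussianTail t - Δ * (exp (4 * δ * t ^ 2) * β ^ 4 / K) := by
        have hsplit : Δ * (exp (4 * δ * t ^ 2) * β ^ 4 / K) =
            exp (4 * δ * t ^ 2) * (Δ * β ^ 3) * (β / K) := by ring
        rw [hsplit, hΔβ]
        nlinarith [le_gaussianTail ht ht2, mul_le_mul_of_nonneg_right hexp hc.le]
    _ ≤ gaussianTail t - Δ * gaussianTail (2 * t / (1 + δ)) :=
        sub_le_sub_left (mul_le_mul_of_nonneg_left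
          (gaussianTail_two_mul_div_le ht hδ (by nlinarith)) (by linarith)) _

lemma roundingThreshold_sq_le_of_one_lt_mul_oddIndepDensity {N : ℝ} (hΔ : 4 ≤ Δ)
    (h : 1 < 3 / 4 * oddIndepDensity Δ * N) :
    roundingThreshold Δ ^ 2 ≤ N := by
  rw [oddIndepDensity] at h
  set X := Δ ^ (1 / 3 : ℝ)
  have hX : 1 ≤ X := one_le_rpow (by linarith) (by norm_num)
  have hL : 1 ≤ √(log Δ) := one_le_sqrt.2 (by linarith [le_log_of_four_le hΔ])
  have hXN : 128 * X * √(log Δ) < 3 * N := by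
    rw [show 3 / 4 * (1 / (32 * X * √(log Δ))) * N = 3 * N / (128 * X * √(log Δ)) by
      field_simp; ring, one_lt_div (by positivity)] at h
    exact h
  rw [roundingThreshold_sq (by linarith)]
  nlinarith [log_le_sub_one_of_pos (by positivity : 0 < 20 / 9 * X)]

lemma sqrt_mul_le_one_div_eighty {N y : ℝ} (hN : 2 ≤ N) (hy : y ≤ N) :
    √(18 * (1 / N ^ 100)) * y ≤ 1 / 80 := by
  have hδ : √(18 * (1 / N ^ 100)) ≤ 5 / N ^ 50 := by
    have h25 : (5 / N ^ 50) ^ 2 = 25 / N ^ 100 := by rw [div_pow, ← pow_mul]; norm_num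
    rw [sqrt_le_iff, h25, mul_one_div]
    exact ⟨by positivity, by gcongr; norm_num⟩
  have hN49 : 2 ^ 49 ≤ N ^ 49 := pow_le_pow_left₀ (by norm_num) hN 49
  calc √(18 * (1 / N ^ 100)) * y ≤ √(18 * (1 / N ^ 100)) * N :=
        mul_le_mul_of_nonneg_left hy (sqrt_nonneg _)
    _ ≤ 5 / N ^ 50 * N := mul_le_mul_of_nonneg_right hδ (by linarith)
    _ = 5 / N ^ 49 := by field_simp
    _ ≤ 1 / 80 := by rw [div_le_div_iff₀ (by positivity) (by norm_num)]; linarith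

end Threshold

lemma norm_toLp_add_le {n : ℕ} {V : Type*} [DecidableEq V] {E : Finset (Finset V)}
    {u : V → Fin n → ℝ} {η : ℝ} (hE : ∀ e ∈ E, #e = 3) (hunit : ∀ a, ∑ i, u a i ^ 2 = 1)
    (hbal : ∀ a b c : V, a ≠ b → a ≠ c → b ≠ c → ({a, b, c} : Finset V) ∈ E →
      ∑ i, (u a i + u b i + u c i) ^ 2 ≤ η) :
    ∀ e ∈ E, ∀ a ∈ e, ∀ b ∈ e, a ≠ b →
      ‖(WithLp.toLp 2 (u a) : EuclideanSpace ℝ (Fin n)) + WithLp.toLp 2 (u b)‖ ≤ 1 + √η := by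
  intro e he a ha b hb hab
  obtain ⟨c, hac, hbc, rfl⟩ :=
    exists_eq_insert_insert_singleton_of_card_eq_three (hE e he) ha hb hab
  have hnorm (v : Fin n → ℝ) :
      ‖(WithLp.toLp 2 v : EuclideanSpace ℝ (Fin n))‖ = √(∑ i, v i ^ 2) := by
    simp [EuclideanSpace.norm_eq]
  set w : V → EuclideanSpace ℝ (Fin n) := fun a => WithLp.toLp 2 (u a)
  calc ‖w a + w b‖ = ‖(w a + w b + w c) - w c‖ := by rw [add_sub_cancel_right]
    _ ≤ ‖w a + w b + w c‖ + ‖w c‖ := norm_sub_le _ _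
    _ ≤ √η + 1 := by
        simp only [w, ← WithLp.toLp_add, hnorm, hunit, sqrt_one, Pi.add_apply]
        gcongr
        exact hbal a b c hab hac hbc he
    _ = 1 + √η := add_comm _ _

theorem exists_large_odd_independent_set
    {V : Type*} [Fintype V] [DecidableEq V]
    (n : ℕ) (hn : 2 ≤ n) (hcard : Fintype.card V = n)
    (E : Finset (Finset V)) (hE : ∀ e ∈ E, e.card = 3)
    (ε : ℝ) (hε : ε = 1 / (n : ℝ) ^ 100)
    (u : V → Fin n → ℝ) (hunit : ∀ a, ∑ i, u a i ^ 2 = 1)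
    (hbal : ∀ a b c : V, a ≠ b → a ≠ c → b ≠ c → ({a, b, c} : Finset V) ∈ E →
      ∑ i, (u a i + u b i + u c i) ^ 2 ≤ 18 * ε)
    (Δ : ℝ) (hΔ : 4 ≤ Δ) (hEcard : (E.card : ℝ) ≤ Δ * n / 3)
    (α : ℝ) (hα : α = 1 / (32 * Δ ^ ((1 : ℝ) / 3) * Real.sqrt (Real.log Δ))) :
    ∃ S : Finset V, (∀ e ∈ E, (e ∩ S).card ≤ 1) ∧
      (3 / 4) * α * n ≤ (S.card : ℝ) := by
  replace hα : α = oddIndepDensity Δ := hα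
  subst hα hε
  by_cases hsmall : 3 / 4 * oddIndepDensity Δ * n ≤ 1
  · obtain ⟨a⟩ : Nonempty V := Fintype.card_pos_iff.1 (by omega)
    refine ⟨{a}, fun e _ => (card_le_card inter_subset_right).trans (card_singleton a).le, ?_⟩
    simpa using hsmall
  push Not at hsmall
  set δ := √(18 * (1 / (n : ℝ) ^ 100))
  have hδt : δ * roundingThreshold Δ ^ 2 ≤ 1 / 80 := sqrt_mul_le_one_div_eighty
    (by exact_mod_cast hn) (roundingThreshold_sq_le_of_one_lt_mul_oddIndepDensity hΔ hsmall)
  obtain ⟨S, hS, hSbound⟩ := exists_isOddIndepSet_card_ge E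
    (u := fun a => (WithLp.toLp 2 (u a) : EuclideanSpace ℝ (Fin n)))
    (fun a => by simp [EuclideanSpace.norm_eq, hunit]) (by positivity)
    (roundingThreshold_pos hΔ) (norm_toLp_add_le hE hunit hbal)
  refine ⟨S, hS, le_trans ?_ hSbound⟩
  have hpairs : ∑ e ∈ E, (#e).choose 2 = 3 * #E := by
    rw [sum_congr rfl fun e he => by rw [hE e he]]
    simp [mul_comm]
  have hcore := three_quarters_mul_oddIndepDensity_le_gaussianTail_sub hΔ (sqrt_nonneg _) hδt
  rw [hcard, hpairs]
  push_cast
  nlinarith [mul_le_mul_of_nonneg_left hcore (Nat.cast_nonneg n : (0 : ℝ) ≤ n),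
    mul_le_mul_of_nonneg_right hEcard (gaussianTail_nonneg (2 * roundingThreshold Δ / (1 + δ)))]
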